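/- Let 𝒱_ω be a variety of ω-continuous Σ-algebras defined by a set E of inequalities between finite partial terms, 𝒱_r the variety of Δ-algebras defined by E, F_ω(X) the free algebra of 𝒱_ω on X, and R(X) = { t^{F_ω(X)} : t ∈ ΔX } the Δ-subalgebra of F_ω(X) generated by X. Then R(X) is the free Δ-algebra in 𝒱_r on generators X: for every Δ-algebra A in 𝒱_r and map h : X → A, there is a unique Δ-algebra morphism R(X) → A extending h. -/

import Mathlib

/-!
The ideal completion `Idl A` of a Δ-algebra `A ∈ 𝒱_r` is an ω-continuous algebra, and it lies in
`𝒱_ω` because the inequalities of `E` are between finite terms. Freeness of `F_ω(X)` extends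
`x ↦ ↓(h x)` to a monotone morphism `F_ω(X) → Idl A`, which sends `t^{F_ω(X)}` to the ideal
generated by the values `s^A` of the finite approximants `s` of `t`; for `t ∈ ΔX` the supremum of
this ideal is `t^A`. Hence `t^{F_ω(X)} ↦ t^A` is a well-defined monotone map on `R(X)`. It is a
Δ-morphism because, in ω-continuous algebras and in Δ-algebras alike, the value of a term with
terms substituted for its variables is the value of the term at the values of those terms; it is
unique because every element of `R(X)` is denoted by a term of `ΔX`.
-/

/-- A ranked alphabet (signature): a set of symbols with arities. -/
structure Signature where
  symb : Type
  ar : symb → ℕ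

/-- A partial Σ-coterm over `X`: a finite or infinite partial Σ-labeled tree
whose internal nodes are labeled by operation symbols (with children indexed by
the arity, some possibly missing) and whose leaves may be labeled by variables
from `X`.  It is represented by its (partial) labeling function on tree
positions. -/
structure Coterm (σ : Signature) (X : Type*) where
  label : List ℕ → Option (σ.symb ⊕ X)
  consistent : ∀ p i, (label (p ++ [i])).isSome →
    ∃ f, label p = some (Sum.inl f) ∧ i < σ.ar f

namespace Coterm

variable {σ : Signature} {X Y : Type*}

theorem ext' {s t : Coterm σ X} (h : s.label = t.label) : s = t := by
  cases s; cases t; cases h; rfl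

/-- The approximation order: `s ≤ t` iff `s` is obtained from `t` by deleting
subterms, i.e. `s` agrees with `t` wherever `s` is defined. -/
instance : PartialOrder (Coterm σ X) where
  le s t := ∀ p v, s.label p = some v → t.label p = some v
  le_refl s := fun _ _ h => h
  le_trans s t u h₁ h₂ := fun p v h => h₂ p v (h₁ p v h)
  le_antisymm s t h₁ h₂ := by
    apply ext'; funext p
    cases hs : s.label p with
    | some v => exact (h₁ p v hs).symm
    | none =>
      cases ht : t.label p with
      | some v => exact absurd (h₂ p v ht) (by rw [hs]; simp)
      | none => rfl

/-- The empty term `⊥`. -/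
instance : OrderBot (Coterm σ X) where
  bot := ⟨fun _ => none, by intro p i h; simp at h⟩
  bot_le t := by intro p v h; simp only at h; exact absurd h (by simp)

@[simp] theorem bot_label (p : List ℕ) : (⊥ : Coterm σ X).label p = none := rfl

/-- The coterm consisting of a single variable. -/
def var (x : X) : Coterm σ X where
  label p := if p = [] then some (Sum.inr x) else none
  consistent := by
    intro p i h
    try simp only at h
    rw [if_neg (by simp)] at h
    simp at h

/-- The labeling function of `node f ts`. -/
def nodeLabel (f : σ.symb) (ts : Fin (σ.ar f) → Coterm σ X) :
    List ℕ → Option (σ.symb ⊕ X)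
  | [] => some (Sum.inl f)
  | i :: q => if h : i < σ.ar f then (ts ⟨i, h⟩).label q else none

/-- The Σ-operations on coterms: `node f ts` is the tree with root label `f`
and children `ts`. -/
def node (f : σ.symb) (ts : Fin (σ.ar f) → Coterm σ X) : Coterm σ X where
  label := nodeLabel f ts
  consistent := by
    intro p i hp
    cases p with
    | nil =>
      refine ⟨f, rfl, ?_⟩
      simp only [List.nil_append, nodeLabel] at hp
      by_contra hlt
      rw [dif_neg hlt] at hp
      simp at hp
    | cons j q =>
      simp only [List.cons_append, nodeLabel] at hp
      by_cases hj : j < σ.ar f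
      · rw [dif_pos hj] at hp
        obtain ⟨g, hg, hi⟩ := (ts ⟨j, hj⟩).consistent q i hp
        exact ⟨g, by simp only [nodeLabel, dif_pos hj]; exact hg, hi⟩
      · rw [dif_neg hj] at hp
        simp at hp

/-- A coterm is finite if it has finitely many positions;
`FT(X)` is the set of finite partial terms. -/
def IsFinite (t : Coterm σ X) : Prop := {p : List ℕ | (t.label p).isSome}.Finite

/-- `s ≪ t`: `s` is finite and is obtained from `t` by deleting subterms. -/
def Ll (s t : Coterm σ X) : Prop := s.IsFinite ∧ s ≤ t

/-- Relabeling of variables along a map `h : X → Y`; this is the unique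
ω-continuous algebra morphism `CT(X) → CT(Y)` extending `x ↦ h x` (viewing
variables of `Y` as coterms), and also gives the functorial action of the
coterm monad. -/
def rename (h : X → Y) (t : Coterm σ X) : Coterm σ Y where
  label p := (t.label p).map (Sum.map id h)
  consistent := by
    intro p i hp
    try simp only at hp ⊢
    rw [Option.isSome_map] at hp
    obtain ⟨f, hf, hi⟩ := t.consistent p i hp
    exact ⟨f, by rw [hf]; rfl, hi⟩

end Coterm

/-- `g : CT(X) → CT(Y)` is a morphism of ω-continuous algebras: strict,
monotone, commuting with the Σ-operations, and preserving suprema of countable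
directed sets. -/
structure IsOmegaContMorphism {σ : Signature} {X Y : Type*}
    (g : Coterm σ X → Coterm σ Y) : Prop where
  monotone : Monotone g
  strict : g ⊥ = ⊥
  ops : ∀ (f : σ.symb) (ts : Fin (σ.ar f) → Coterm σ X),
    g (Coterm.node f ts) = Coterm.node f (fun i => g (ts i))
  cont : ∀ S : Set (Coterm σ X), S.Countable → S.Nonempty →
    DirectedOn (· ≤ ·) S → ∀ t, IsLUB S t → IsLUB (g '' S) (g t)

/-- A quasi-regular family: an assignment to each set `X` of an ordered
subalgebra `ΔX` of `CT(X)` containing the variables, such that for every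
ω-continuous morphism `h : CT(X) → CT(Y)` with `h(X) ⊆ ΔY` one has
`h(ΔX) ⊆ ΔY`. -/
structure QuasiRegular (σ : Signature) where
  Del : (X : Type) → Set (Coterm σ X)
  bot_mem : ∀ X : Type, (⊥ : Coterm σ X) ∈ Del X
  var_mem : ∀ (X : Type) (x : X), Coterm.var x ∈ Del X
  op_closed : ∀ (X : Type) (f : σ.symb) (ts : Fin (σ.ar f) → Coterm σ X),
    (∀ i, ts i ∈ Del X) → Coterm.node f ts ∈ Del X
  stable : ∀ (X Y : Type) (g : Coterm σ X → Coterm σ Y),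
    IsOmegaContMorphism g → (∀ x : X, g (Coterm.var x) ∈ Del Y) →
    ∀ t ∈ Del X, g t ∈ Del Y

/-- An ordered Σ-algebra structure on a pointed poset `A`. -/
structure OrderedAlg (σ : Signature) (A : Type*) [PartialOrder A] [OrderBot A] where
  op : ∀ f : σ.symb, (Fin (σ.ar f) → A) → A
  mono : ∀ f (a b : Fin (σ.ar f) → A), (∀ i, a i ≤ b i) → op f a ≤ op f b

/-- `S` is an ω-ideal relative to the ambient set `U`. -/
def IsOmegaIdealIn {α : Type*} [Preorder α] (U : Set α) (S : Set α) : Prop :=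
  S ⊆ U ∧ ∃ C : Set α, C ⊆ S ∧ C.Countable ∧ C.Nonempty ∧ DirectedOn (· ≤ ·) C ∧
    S = {x ∈ U | ∃ c ∈ C, x ≤ c}

/-- `S` is an ω-ideal: the down-closure of a countable directed set. -/
def IsOmegaIdeal {α : Type*} [Preorder α] (S : Set α) : Prop :=
  IsOmegaIdealIn Set.univ S

/-- `β : FT(A) → A` interprets finite partial terms over `A` in the ordered
algebra `(A, alg)`: it is the structure map of `A` as an Eilenberg–Moore
algebra for the finite partial term monad.  (The value of `β` on non-finite
coterms is irrelevant.) -/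
def IsFinInterp {σ : Signature} {A : Type*} [PartialOrder A] [OrderBot A]
    (alg : OrderedAlg σ A) (β : Coterm σ A → A) : Prop :=
  (β ⊥ = ⊥) ∧
  (∀ a : A, β (Coterm.var a) = a) ∧
  (∀ (f : σ.symb) (ts : Fin (σ.ar f) → Coterm σ A), (∀ i, (ts i).IsFinite) →
    β (Coterm.node f ts) = alg.op f (fun i => β (ts i))) ∧
  (∀ s s' : Coterm σ A, s.IsFinite → s'.IsFinite → s ≤ s' → β s ≤ β s')

/-- A Δ-set in `A` (w.r.t. the interpretation `β`): the set of values of the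
finite approximants of some term `t ∈ ΔA`. -/
def IsDelSet {σ : Signature} (Q : QuasiRegular σ) {A : Type} [PartialOrder A]
    [OrderBot A] (β : Coterm σ A → A) (D : Set A) : Prop :=
  ∃ t ∈ Q.Del A, D = {x : A | ∃ s, Coterm.Ll s t ∧ x = β s}

/-- `A` is a Δ-regular algebra with (extended) structure map `β : ΔA → A`:
`β` interprets finite terms, the supremum of each Δ-set
`{β(s) : s ≪ t}` (for `t ∈ ΔA`) exists and equals `β(t)`
(this is the extension `β(t) = ⋁{β(s) : s ≪ t}`), and the algebraic
operations preserve suprema of Δ-sets. -/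
def IsDelStructure {σ : Signature} (Q : QuasiRegular σ) {A : Type}
    [PartialOrder A] [OrderBot A] (alg : OrderedAlg σ A)
    (β : Coterm σ A → A) : Prop :=
  IsFinInterp alg β ∧
  (∀ t ∈ Q.Del A, IsLUB {x : A | ∃ s, Coterm.Ll s t ∧ x = β s} (β t)) ∧
  (∀ (f : σ.symb) (as : Fin (σ.ar f) → A) (i : Fin (σ.ar f)),
    ∀ t ∈ Q.Del A,
      IsLUB {x : A | ∃ s, Coterm.Ll s t ∧
          x = alg.op f (Function.update as i (β s))}
        (alg.op f (Function.update as i (β t))))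

/-- The multiplication (substitution/flattening) of the coterm monad,
characterized as the unique ω-continuous morphism `CT(CT X) → CT X` sending
each variable `s ∈ CT X` to `s` itself. -/
def IsFlatten {σ : Signature} {X : Type*}
    (flat : Coterm σ (Coterm σ X) → Coterm σ X) : Prop :=
  IsOmegaContMorphism flat ∧ ∀ s : Coterm σ X, flat (Coterm.var s) = s

/-- `β : CT(B) → B` is the structure map of `B` as an ω-continuous algebra:
it interprets all partial coterms over `B`, each coterm denoting the supremum
of the values of its finite approximants; moreover `B` is ω-complete and its
operations are ω-continuous. -/
def IsOmegaContStructure {σ : Signature} {B : Type*} [PartialOrder B]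
    [OrderBot B] (alg : OrderedAlg σ B) (β : Coterm σ B → B) : Prop :=
  (β ⊥ = ⊥) ∧
  (∀ b : B, β (Coterm.var b) = b) ∧
  (∀ (f : σ.symb) (ts : Fin (σ.ar f) → Coterm σ B),
    β (Coterm.node f ts) = alg.op f (fun i => β (ts i))) ∧
  Monotone β ∧
  (∀ t : Coterm σ B, IsLUB {x : B | ∃ s, Coterm.Ll s t ∧ x = β s} (β t)) ∧
  (∀ S : Set B, S.Countable → S.Nonempty → DirectedOn (· ≤ ·) S →
    ∃ b, IsLUB S b) ∧
  (∀ (f : σ.symb) (as : Fin (σ.ar f) → B) (i : Fin (σ.ar f))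
      (S : Set B) (b : B), S.Countable → S.Nonempty → DirectedOn (· ≤ ·) S →
    IsLUB S b →
    IsLUB {x : B | ∃ d ∈ S, x = alg.op f (Function.update as i d)}
      (alg.op f (Function.update as i b)))

/-- A bundled ω-continuous Σ-algebra. -/
structure OmegaContAlg (σ : Signature) where
  A : Type
  po : PartialOrder A
  ob : @OrderBot A po.toLE
  alg : @OrderedAlg σ A po ob
  interp : Coterm σ A → A
  str : @IsOmegaContStructure σ A po ob alg interp

/-- A bundled Δ-regular algebra. -/
structure DelAlg (σ : Signature) (Q : QuasiRegular σ) where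
  A : Type
  po : PartialOrder A
  ob : @OrderBot A po.toLE
  alg : @OrderedAlg σ A po ob
  interp : Coterm σ A → A
  str : @IsDelStructure σ Q A po ob alg interp

/-- `B` satisfies all inequalities `t ⊑ t'` in `E` (between finite partial
terms over the countable variable set `X_ω = ℕ`), interpreted pointwise via
the structure map `interp` under every valuation `v : ℕ → B`. -/
def SatisfiesIneqs {σ : Signature} {B : Type*} [PartialOrder B]
    (interp : Coterm σ B → B) (E : Set (Coterm σ ℕ × Coterm σ ℕ)) : Prop :=
  ∀ e ∈ E, ∀ v : ℕ → B,
    interp (Coterm.rename v e.1) ≤ interp (Coterm.rename v e.2)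

/-- `Fω` together with `ι : X → Fω` is the free ω-continuous algebra of the
variety `𝒱_ω` defined by `E`, on generators `X`. -/
def IsFreeOmegaCont {σ : Signature} (E : Set (Coterm σ ℕ × Coterm σ ℕ))
    (X : Type) {Fω : Type} [PartialOrder Fω] [OrderBot Fω]
    (βω : Coterm σ Fω → Fω) (ι : X → Fω) : Prop :=
  ∀ B : OmegaContAlg σ, @SatisfiesIneqs σ B.A B.po B.interp E →
    ∀ h : X → B.A,
      ∃ g : Fω → B.A,
        ((∀ a b : Fω, a ≤ b → B.po.le (g a) (g b)) ∧
         g ⊥ = (@OrderBot.toBot B.A B.po.toLE B.ob).bot ∧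
         (∀ t : Coterm σ Fω, g (βω t) = B.interp (Coterm.rename g t)) ∧
         (∀ x : X, g (ι x) = h x)) ∧
        ∀ g' : Fω → B.A,
          ((∀ a b : Fω, a ≤ b → B.po.le (g' a) (g' b)) ∧
           g' ⊥ = (@OrderBot.toBot B.A B.po.toLE B.ob).bot ∧
           (∀ t : Coterm σ Fω, g' (βω t) = B.interp (Coterm.rename g' t)) ∧
           (∀ x : X, g' (ι x) = h x)) → g' = g

namespace Coterm

variable {σ : Signature} {X Y Z A : Type*}

def support (t : Coterm σ X) : Set (List ℕ) := {p | (t.label p).isSome}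

theorem mem_support_iff {t : Coterm σ X} {p : List ℕ} : p ∈ t.support ↔ (t.label p).isSome :=
  Iff.rfl

theorem mem_support_of_append {t : Coterm σ X} (p q : List ℕ) (h : p ++ q ∈ t.support) :
    p ∈ t.support := by
  induction q using List.reverseRecOn with
  | nil => simpa using h
  | append_singleton q i ih =>
    rw [← List.append_assoc] at h
    obtain ⟨f, hf, -⟩ := t.consistent (p ++ q) i h
    exact ih (by simp [support, hf])

theorem append_singleton_mem_support {t : Coterm σ X} {p : List ℕ} {i : ℕ}
    (h : p ++ [i] ∈ t.support) : p ∈ t.support :=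
  mem_support_of_append p [i] h

theorem mem_support_of_prefix {t : Coterm σ X} {p q : List ℕ} (hpq : p <+: q)
    (h : q ∈ t.support) : p ∈ t.support := by
  obtain ⟨r, rfl⟩ := hpq
  exact mem_support_of_append p r h

theorem label_eq_none_of_notMem_support {t : Coterm σ X} {p : List ℕ} (h : p ∉ t.support) :
    t.label p = none := by
  simpa [support] using h

theorem label_append_of_var {t : Coterm σ X} {p : List ℕ} {x : X}
    (h : t.label p = some (Sum.inr x)) {q : List ℕ} (hq : q ≠ []) :
    t.label (p ++ q) = none := by
  obtain ⟨i, q, rfl⟩ := List.exists_cons_of_ne_nil hq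
  refine label_eq_none_of_notMem_support fun hs => ?_
  obtain ⟨f, hf, -⟩ := t.consistent p i (mem_support_of_append (p ++ [i]) q (by simpa using hs))
  simp [h] at hf

theorem le_iff_support {s t : Coterm σ X} :
    s ≤ t ↔ ∀ p ∈ s.support, s.label p = t.label p := by
  constructor
  · intro h p hp
    obtain ⟨v, hv⟩ := Option.isSome_iff_exists.mp hp
    rw [hv, h p v hv]
  · intro h p v hv
    rw [← h p (by simp [support, hv]), hv]

theorem support_mono {s t : Coterm σ X} (h : s ≤ t) : s.support ⊆ t.support := by
  intro p hp
  obtain ⟨v, hv⟩ := Option.isSome_iff_exists.mp hp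
  simp [support, h p v hv]

def subtree (t : Coterm σ X) (i : ℕ) : Coterm σ X where
  label p := t.label (i :: p)
  consistent p j h := t.consistent (i :: p) j h

theorem subtree_mono {s t : Coterm σ X} (h : s ≤ t) (i : ℕ) : s.subtree i ≤ t.subtree i :=
  fun _ _ hp => h _ _ hp

@[simp] theorem var_label_nil (x : X) : (var x : Coterm σ X).label [] = some (Sum.inr x) := rfl

@[simp] theorem var_label_cons (x : X) (i : ℕ) (p : List ℕ) :
    (var x : Coterm σ X).label (i :: p) = none := rfl

@[simp] theorem node_label_nil (f : σ.symb) (ts : Fin (σ.ar f) → Coterm σ X) :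
    (node f ts).label [] = some (Sum.inl f) := rfl

theorem node_label_cons (f : σ.symb) (ts : Fin (σ.ar f) → Coterm σ X) (i : Fin (σ.ar f))
    (p : List ℕ) : (node f ts).label (i :: p) = (ts i).label p := by
  simp [node, nodeLabel]

theorem node_label_cons_of_le (f : σ.symb) (ts : Fin (σ.ar f) → Coterm σ X) {i : ℕ}
    (h : σ.ar f ≤ i) (p : List ℕ) : (node f ts).label (i :: p) = none := by
  simp [node, nodeLabel, h.not_gt]

theorem subtree_node (f : σ.symb) (ts : Fin (σ.ar f) → Coterm σ X) (i : Fin (σ.ar f)) :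
    (node f ts).subtree i = ts i :=
  ext' (funext (node_label_cons f ts i))

theorem eq_bot_of_label_nil {t : Coterm σ X} (h : t.label [] = none) : t = ⊥ := by
  refine ext' (funext fun p => label_eq_none_of_notMem_support fun hp => ?_)
  simpa [support, h] using mem_support_of_prefix (List.nil_prefix) hp

theorem eq_var_of_label_nil {t : Coterm σ X} {x : X} (h : t.label [] = some (Sum.inr x)) :
    t = var x := by
  refine ext' (funext fun p => ?_)
  cases p with
  | nil => exact h
  | cons i q => simpa using label_append_of_var h (List.cons_ne_nil i q)

theorem eq_node_of_label_nil {t : Coterm σ X} {f : σ.symb} (h : t.label [] = some (Sum.inl f)) :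
    t = node f (fun i => t.subtree i) := by
  refine ext' (funext fun p => ?_)
  cases p with
  | nil => exact h
  | cons i q =>
    by_cases hi : i < σ.ar f
    · exact (node_label_cons f (fun i => t.subtree i) ⟨i, hi⟩ q).symm
    · rw [node_label_cons_of_le f _ (not_lt.mp hi)]
      refine label_eq_none_of_notMem_support fun hs => hi ?_
      obtain ⟨f', hf', hlt⟩ := t.consistent [] i (mem_support_of_append [i] q hs)
      obtain rfl : f = f' := by simpa [h] using hf'
      exact hlt

theorem node_le_node {f : σ.symb} {ss ts : Fin (σ.ar f) → Coterm σ X} (h : ∀ i, ss i ≤ ts i) :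
    node f ss ≤ node f ts := by
  intro p v hp
  cases p with
  | nil => exact hp
  | cons i q =>
    by_cases hi : i < σ.ar f
    · rw [node_label_cons f _ ⟨i, hi⟩] at hp ⊢
      exact h _ _ _ hp
    · simp [node_label_cons_of_le f _ (not_lt.mp hi)] at hp

theorem eq_bot_or_eq_of_le_var {s : Coterm σ X} {x : X} (h : s ≤ var x) : s = ⊥ ∨ s = var x := by
  cases hs : s.label [] with
  | none => exact Or.inl (eq_bot_of_label_nil hs)
  | some v =>
    have := h [] v hs
    obtain rfl : Sum.inr x = v := by simpa using this
    exact Or.inr (eq_var_of_label_nil hs)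

theorem eq_bot_or_exists_of_le_node {s : Coterm σ X} {f : σ.symb}
    {ts : Fin (σ.ar f) → Coterm σ X} (h : s ≤ node f ts) :
    s = ⊥ ∨ ∃ ss : Fin (σ.ar f) → Coterm σ X, (∀ i, ss i ≤ ts i) ∧ s = node f ss := by
  cases hs : s.label [] with
  | none => exact Or.inl (eq_bot_of_label_nil hs)
  | some v =>
    have := h [] v hs
    obtain rfl : Sum.inl f = v := by simpa using this
    refine Or.inr ⟨fun i => s.subtree i, fun i => ?_, eq_node_of_label_nil hs⟩
    simpa only [subtree_node] using subtree_mono h i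

theorem isFinite_bot : (⊥ : Coterm σ X).IsFinite := by
  simp [IsFinite]

theorem isFinite_var (x : X) : (var x : Coterm σ X).IsFinite := by
  refine (Set.finite_singleton []).subset fun p hp => ?_
  cases p with
  | nil => rfl
  | cons i q => simp at hp

theorem IsFinite.mono {s t : Coterm σ X} (ht : t.IsFinite) (h : s ≤ t) : s.IsFinite :=
  Set.Finite.subset ht (support_mono h)

theorem IsFinite.subtree {t : Coterm σ X} (ht : t.IsFinite) (i : ℕ) : (t.subtree i).IsFinite :=
  (ht.preimage List.cons_injective.injOn).subset fun _ hp => hp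

theorem isFinite_node {f : σ.symb} {ts : Fin (σ.ar f) → Coterm σ X}
    (h : ∀ i, (ts i).IsFinite) : (node f ts).IsFinite := by
  refine ((Set.finite_iUnion fun i => (h i).image ((i : ℕ) :: ·)).insert []).subset ?_
  rintro (_ | ⟨i, q⟩) hp
  · exact Set.mem_insert _ _
  · by_cases hi : i < σ.ar f
    · refine Or.inr (Set.mem_iUnion.mpr ⟨⟨i, hi⟩, q, ?_, rfl⟩)
      simpa [support, node_label_cons f ts ⟨i, hi⟩] using hp
    · simp [node_label_cons_of_le f ts (not_lt.mp hi)] at hp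

@[elab_as_elim]
theorem finite_induction {P : Coterm σ X → Prop} (hbot : P ⊥) (hvar : ∀ x, P (var x))
    (hnode : ∀ f (ts : Fin (σ.ar f) → Coterm σ X), (∀ i, (ts i).IsFinite) → (∀ i, P (ts i)) →
      P (node f ts)) {t : Coterm σ X} (ht : t.IsFinite) : P t := by
  suffices H : ∀ n (t : Coterm σ X), t.IsFinite → (∀ p ∈ t.support, p.length < n) → P t by
    obtain ⟨n, hn⟩ := (ht.image List.length).bddAbove
    exact H (n + 1) t ht fun p hp => Nat.lt_succ_of_le (hn ⟨p, hp, rfl⟩)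
  intro n
  induction n with
  | zero =>
    intro t _ hlen
    have : t.label [] = none := label_eq_none_of_notMem_support fun h => by simpa using hlen [] h
    rw [eq_bot_of_label_nil this]
    exact hbot
  | succ n ih =>
    intro t ht hlen
    match h : t.label [] with
    | none => rw [eq_bot_of_label_nil h]; exact hbot
    | some (Sum.inr x) => rw [eq_var_of_label_nil h]; exact hvar x
    | some (Sum.inl f) =>
      rw [eq_node_of_label_nil h]
      exact hnode f _ (fun i => ht.subtree i) fun i =>
        ih _ (ht.subtree i) fun p hp => Nat.succ_lt_succ_iff.mp (hlen (i :: p) hp)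

open Classical in
noncomputable def restrict (t : Coterm σ X) (D : Set (List ℕ))
    (hD : ∀ p i, p ++ [i] ∈ D → p ∈ D) : Coterm σ X where
  label p := if p ∈ D then t.label p else none
  consistent p i h := by
    by_cases hp : p ++ [i] ∈ D
    · simp only [hp, if_true] at h
      obtain ⟨f, hf, hi⟩ := t.consistent p i h
      exact ⟨f, by simp [hD p i hp, hf], hi⟩
    · simp [hp] at h

section restrict

variable {t : Coterm σ X} {D : Set (List ℕ)} {hD : ∀ p i, p ++ [i] ∈ D → p ∈ D}

theorem restrict_label_of_mem {p : List ℕ} (hp : p ∈ D) : (t.restrict D hD).label p = t.label p :=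
  if_pos hp

theorem restrict_label_of_notMem {p : List ℕ} (hp : p ∉ D) : (t.restrict D hD).label p = none :=
  if_neg hp

theorem restrict_le : t.restrict D hD ≤ t := by
  intro p v hv
  by_cases hp : p ∈ D
  · rwa [restrict_label_of_mem hp] at hv
  · simp [restrict_label_of_notMem hp] at hv

theorem isFinite_restrict (hfin : D.Finite) : (t.restrict D hD).IsFinite := by
  refine hfin.subset fun p hp => ?_
  by_contra h
  simp [restrict_label_of_notMem h] at hp

end restrict

theorem isLUB_label {S : Set (Coterm σ X)} {u : Coterm σ X} (h : IsLUB S u) {p : List ℕ}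
    {v : σ.symb ⊕ X} (hp : u.label p = some v) : ∃ s ∈ S, s.label p = some v := by
  by_contra! hS
  -- cutting off the subterm of `u` at `p` gives a smaller upper bound of `S`
  let u' := u.restrict {q | ¬ p <+: q} fun q i hq hpq => hq (hpq.trans (List.prefix_append q [i]))
  have hub : u' ∈ upperBounds S := by
    intro s hs q w hq
    have hpq : ¬ p <+: q := by
      intro hpq
      obtain ⟨w', hw'⟩ := Option.isSome_iff_exists.mp
        (mem_support_of_prefix hpq (show q ∈ s.support by simp [support, hq]))
      obtain rfl : v = w' := by simpa [hp] using h.1 hs p w' hw'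
      exact hS s hs hw'
    rw [restrict_label_of_mem hpq]
    exact h.1 hs q w hq
  have hnot : p ∉ {q | ¬ p <+: q} := fun h' => h' (List.prefix_refl p)
  simpa [u', restrict_label_of_notMem hnot] using h.2 hub p v hp

theorem ll_bot {t : Coterm σ X} : Ll ⊥ t := ⟨isFinite_bot, bot_le⟩

theorem ll_self {t : Coterm σ X} (ht : t.IsFinite) : Ll t t := ⟨ht, le_rfl⟩

theorem Ll.trans_le {s t u : Coterm σ X} (hst : Ll s t) (htu : t ≤ u) : Ll s u :=
  ⟨hst.1, hst.2.trans htu⟩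

theorem directedOn_ll (t : Coterm σ X) : DirectedOn (· ≤ ·) {s | Ll s t} := by
  rintro s ⟨hs, hst⟩ s' ⟨hs', hst'⟩
  have hD : ∀ p i, p ++ [i] ∈ s.support ∪ s'.support → p ∈ s.support ∪ s'.support :=
    fun p i hp => hp.imp append_singleton_mem_support append_singleton_mem_support
  have hle {r : Coterm σ X} (hr : r ≤ t) (hsup : r.support ⊆ s.support ∪ s'.support) :
      r ≤ t.restrict _ hD := fun p v hv => by
    rw [restrict_label_of_mem (hsup (by simp [support, hv]))]
    exact hr p v hv
  exact ⟨t.restrict _ hD, ⟨isFinite_restrict (hs.union hs'), restrict_le⟩,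
    hle hst Set.subset_union_left, hle hst' Set.subset_union_right⟩

theorem ll_node_iff {f : σ.symb} {ts : Fin (σ.ar f) → Coterm σ X} {s : Coterm σ X} :
    Ll s (node f ts) ↔ s = ⊥ ∨ ∃ ss : Fin (σ.ar f) → Coterm σ X, (∀ i, Ll (ss i) (ts i)) ∧
      s = node f ss := by
  constructor
  · rintro ⟨hs, hle⟩
    refine (eq_bot_or_exists_of_le_node hle).imp_right ?_
    rintro ⟨ss, hss, rfl⟩
    exact ⟨ss, fun i => ⟨by simpa [subtree_node] using hs.subtree i, hss i⟩, rfl⟩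
  · rintro (rfl | ⟨ss, hss, rfl⟩)
    · exact ll_bot
    · exact ⟨isFinite_node fun i => (hss i).1, node_le_node fun i => (hss i).2⟩

@[simp] theorem rename_label (h : X → Y) (t : Coterm σ X) (p : List ℕ) :
    (rename h t).label p = (t.label p).map (Sum.map id h) := rfl

theorem rename_label_eq_inr_iff {h : X → Y} {t : Coterm σ X} {p : List ℕ} {y : Y} :
    (rename h t).label p = some (Sum.inr y) ↔ ∃ x, t.label p = some (Sum.inr x) ∧ h x = y := by
  rcases ht : t.label p with _ | _ | _ <;> simp [ht]

theorem rename_bot (h : X → Y) : rename h (⊥ : Coterm σ X) = ⊥ :=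
  ext' (funext fun _ => rfl)

theorem rename_var (h : X → Y) (x : X) : rename h (var x : Coterm σ X) = var (h x) :=
  ext' (funext fun p => by cases p <;> rfl)

theorem rename_node (h : X → Y) (f : σ.symb) (ts : Fin (σ.ar f) → Coterm σ X) :
    rename h (node f ts) = node f (fun i => rename h (ts i)) := by
  refine ext' (funext fun p => ?_)
  rcases p with _ | ⟨i, q⟩
  · rfl
  · by_cases hi : i < σ.ar f
    · simp [node_label_cons f _ ⟨i, hi⟩]
    · simp [node_label_cons_of_le f _ (not_lt.mp hi)]

theorem rename_mono (h : X → Y) {s t : Coterm σ X} (hst : s ≤ t) : rename h s ≤ rename h t := by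
  intro p v hv
  obtain ⟨w, hw, rfl⟩ := Option.map_eq_some_iff.mp hv
  simp [hst p w hw]

theorem rename_comp (g : Y → Z) (h : X → Y) (t : Coterm σ X) :
    rename g (rename h t) = rename (g ∘ h) t := by
  refine ext' (funext fun p => ?_)
  rcases hp : t.label p with _ | _ | _ <;> simp [hp]

theorem rename_congr {h h' : X → Y} {t : Coterm σ X}
    (H : ∀ p x, t.label p = some (Sum.inr x) → h x = h' x) : rename h t = rename h' t := by
  refine ext' (funext fun p => ?_)
  rcases hp : t.label p with _ | _ | x
  · simp [hp]
  · simp [hp]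
  · simp [hp, H p x hp]

theorem rename_id (t : Coterm σ X) : rename id t = t := by
  refine ext' (funext fun p => ?_)
  rcases hp : t.label p with _ | _ | _ <;> simp [hp]

theorem IsFinite.rename {t : Coterm σ X} (ht : t.IsFinite) (h : X → Y) :
    (t.rename h).IsFinite :=
  ht.subset fun p hp => by simpa using hp

theorem ll_rename_iff {h : X → Y} {u : Coterm σ X} {s' : Coterm σ Y} :
    Ll s' (rename h u) ↔ ∃ s, Ll s u ∧ s' = rename h s := by
  constructor
  · rintro ⟨hs', hle⟩
    refine ⟨u.restrict s'.support fun p i => append_singleton_mem_support,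
      ⟨isFinite_restrict hs', restrict_le⟩, ext' (funext fun p => ?_)⟩
    by_cases hp : p ∈ s'.support
    · obtain ⟨v, hv⟩ := Option.isSome_iff_exists.mp hp
      rw [hv, rename_label, restrict_label_of_mem hp, ← rename_label, hle p v hv]
    · rw [label_eq_none_of_notMem_support hp, rename_label, restrict_label_of_notMem hp]
      rfl
  · rintro ⟨s, ⟨hs, hle⟩, rfl⟩
    exact ⟨hs.rename h, rename_mono h hle⟩

theorem isOmegaContMorphism_rename (h : X → Y) :
    IsOmegaContMorphism (rename h : Coterm σ X → Coterm σ Y) where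
  monotone _ _ := rename_mono h
  strict := rename_bot h
  ops := rename_node h
  cont S _ _ _ u hu := by
    refine ⟨Set.forall_mem_image.mpr fun s hs => rename_mono h (hu.1 hs), fun w hw p v hv => ?_⟩
    obtain ⟨v₀, hv₀, rfl⟩ := Option.map_eq_some_iff.mp hv
    obtain ⟨s, hs, hsp⟩ := isLUB_label hu hv₀
    exact hw (Set.mem_image_of_mem _ hs) p _ (by simp [hsp])

def substLabel (k : A → Coterm σ X) : Coterm σ A → List ℕ → Option (σ.symb ⊕ X)
  | u, [] => match u.label [] with
    | some (Sum.inr a) => (k a).label []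
    | some (Sum.inl f) => some (Sum.inl f)
    | none => none
  | u, i :: p => match u.label [] with
    | some (Sum.inr a) => (k a).label (i :: p)
    | some (Sum.inl _) => substLabel k (u.subtree i) p
    | none => none

section substLabel

variable {k : A → Coterm σ X} {u : Coterm σ A}

theorem substLabel_of_label_nil_none (hu : u.label [] = none) (p : List ℕ) :
    substLabel k u p = none := by
  cases p <;> simp [substLabel, hu]

theorem substLabel_of_label_nil_inr {a : A} (hu : u.label [] = some (Sum.inr a)) (p : List ℕ) :
    substLabel k u p = (k a).label p := by
  cases p <;> simp [substLabel, hu]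

theorem substLabel_nil_of_label_nil_inl {f : σ.symb} (hu : u.label [] = some (Sum.inl f)) :
    substLabel k u [] = some (Sum.inl f) := by
  simp [substLabel, hu]

theorem substLabel_cons_of_label_nil_inl {f : σ.symb} (hu : u.label [] = some (Sum.inl f))
    (i : ℕ) (p : List ℕ) : substLabel k u (i :: p) = substLabel k (u.subtree i) p := by
  simp [substLabel, hu]

theorem label_nil_isSome_of_substLabel_isSome {p : List ℕ} (h : (substLabel k u p).isSome) :
    (u.label []).isSome := by
  cases hu : u.label [] with
  | none => simp [substLabel_of_label_nil_none hu] at h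
  | some => rfl

theorem substLabel_consistent (p : List ℕ) (i : ℕ) (h : (substLabel k u (p ++ [i])).isSome) :
    ∃ f, substLabel k u p = some (Sum.inl f) ∧ i < σ.ar f := by
  induction p generalizing u with
  | nil =>
    match hu : u.label [] with
    | none => simp [substLabel_of_label_nil_none hu] at h
    | some (Sum.inr a) =>
      rw [substLabel_of_label_nil_inr hu] at h ⊢
      exact (k a).consistent [] i h
    | some (Sum.inl f) =>
      rw [List.nil_append, substLabel_cons_of_label_nil_inl hu] at h
      obtain ⟨g, hg, hi⟩ := u.consistent [] i (label_nil_isSome_of_substLabel_isSome h)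
      obtain rfl : f = g := by simpa [hu] using hg
      exact ⟨f, substLabel_nil_of_label_nil_inl hu, hi⟩
  | cons j p ih =>
    match hu : u.label [] with
    | none => simp [substLabel_of_label_nil_none hu] at h
    | some (Sum.inr a) =>
      rw [substLabel_of_label_nil_inr hu] at h ⊢
      exact (k a).consistent _ i h
    | some (Sum.inl f) =>
      rw [List.cons_append, substLabel_cons_of_label_nil_inl hu] at h
      rw [substLabel_cons_of_label_nil_inl hu]
      exact ih h

end substLabel

def subst (k : A → Coterm σ X) (u : Coterm σ A) : Coterm σ X where
  label := substLabel k u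
  consistent := substLabel_consistent

section subst

variable (k : A → Coterm σ X)

@[simp] theorem subst_label (u : Coterm σ A) (p : List ℕ) :
    (subst k u).label p = substLabel k u p := rfl

theorem subst_var (a : A) : subst k (var a) = k a :=
  ext' (funext (substLabel_of_label_nil_inr (var_label_nil a)))

theorem subst_bot : subst k (⊥ : Coterm σ A) = ⊥ :=
  ext' (funext (substLabel_of_label_nil_none rfl))

theorem subst_node (f : σ.symb) (ts : Fin (σ.ar f) → Coterm σ A) :
    subst k (node f ts) = node f (fun i => subst k (ts i)) := by
  refine ext' (funext fun p => ?_)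
  rcases p with _ | ⟨i, p⟩
  · exact substLabel_nil_of_label_nil_inl (k := k) (node_label_nil f ts)
  · rw [subst_label, substLabel_cons_of_label_nil_inl (node_label_nil f ts)]
    by_cases hi : i < σ.ar f
    · rw [node_label_cons f _ ⟨i, hi⟩, show (node f ts).subtree i = ts ⟨i, hi⟩ from
        subtree_node f ts ⟨i, hi⟩]
      rfl
    · rw [node_label_cons_of_le f _ (not_lt.mp hi), substLabel_of_label_nil_none]
      exact node_label_cons_of_le f ts (not_lt.mp hi) []

theorem exists_prefix_subst_label {u : Coterm σ A} {p : List ℕ} {v : σ.symb ⊕ X}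
    (hv : (subst k u).label p = some v) :
    ∃ q, q <+: p ∧ q ∈ u.support ∧
      ∀ u' : Coterm σ A, (∀ q', q' <+: q → u'.label q' = u.label q') →
        (subst k u').label p = some v := by
  induction p generalizing u with
  | nil =>
    refine ⟨[], List.prefix_refl _, label_nil_isSome_of_substLabel_isSome (k := k) (p := [])
      (by simp [← subst_label, hv]), ?_⟩
    intro u' hu'
    have := hu' [] (List.prefix_refl _)
    simp only [subst_label, substLabel] at hv ⊢
    rwa [this]
  | cons i p ih =>
    rcases hu : u.label [] with _ | f | a
    · simp [substLabel_of_label_nil_none hu] at hv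
    · rw [subst_label, substLabel_cons_of_label_nil_inl hu] at hv
      obtain ⟨q, hqp, hq, H⟩ := ih hv
      refine ⟨i :: q, List.cons_prefix_cons.mpr ⟨rfl, hqp⟩, hq, fun u' hu' => ?_⟩
      rw [subst_label, substLabel_cons_of_label_nil_inl ((hu' [] List.nil_prefix).trans hu)]
      exact H _ fun q' hq' => hu' (i :: q') (List.cons_prefix_cons.mpr ⟨rfl, hq'⟩)
    · refine ⟨[], List.nil_prefix, by simp [mem_support_iff, hu], fun u' hu' => ?_⟩
      rw [subst_label, substLabel_of_label_nil_inr ((hu' [] (List.prefix_refl _)).trans hu)]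
      rwa [subst_label, substLabel_of_label_nil_inr hu] at hv

theorem label_prefix_eq_of_le {s u : Coterm σ A} (h : s ≤ u) {q : List ℕ} (hq : q ∈ s.support) :
    ∀ q', q' <+: q → u.label q' = s.label q' :=
  fun q' hq' => (le_iff_support.mp h q' (mem_support_of_prefix hq' hq)).symm

theorem subst_mono {s u : Coterm σ A} (hsu : s ≤ u) : subst k s ≤ subst k u := by
  intro p v hv
  obtain ⟨q, -, hq, H⟩ := exists_prefix_subst_label k hv
  exact H u (label_prefix_eq_of_le hsu hq)

theorem isOmegaContMorphism_subst :
    IsOmegaContMorphism (subst k : Coterm σ A → Coterm σ X) where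
  monotone _ _ := subst_mono k
  strict := subst_bot k
  ops := subst_node k
  cont S _ _ _ u hu := by
    refine ⟨Set.forall_mem_image.mpr fun s hs => subst_mono k (hu.1 hs), fun w hw p v hv => ?_⟩
    obtain ⟨q, -, hq, H⟩ := exists_prefix_subst_label k hv
    obtain ⟨v', hv'⟩ := Option.isSome_iff_exists.mp hq
    obtain ⟨s, hs, hsq⟩ := isLUB_label hu hv'
    have hqs : q ∈ s.support := by simp [mem_support_iff, hsq]
    exact hw (Set.mem_image_of_mem _ hs) p v
      (H s fun q' hq' => (label_prefix_eq_of_le (hu.1 hs) hqs q' hq').symm)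

theorem ll_subst {u : Coterm σ A} {s' : Coterm σ X} (h : Ll s' (subst k u)) :
    ∃ s, Ll s u ∧ s' ≤ subst k s := by
  refine ⟨u.restrict s'.support fun p i => append_singleton_mem_support,
    ⟨isFinite_restrict h.1, restrict_le⟩, fun p v hv => ?_⟩
  obtain ⟨q, hqp, hq, H⟩ := exists_prefix_subst_label k (h.2 p v hv)
  exact H _ fun q' hq' => restrict_label_of_mem
    (mem_support_of_prefix (hq'.trans hqp) (by simp [mem_support_iff, hv]))

theorem rename_subst (h : X → Y) (u : Coterm σ A) :
    rename h (subst k u) = subst (fun a => rename h (k a)) u := by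
  refine ext' (funext fun p => ?_)
  induction p generalizing u with
  | nil => rcases hu : u.label [] with _ | f | a <;> simp [substLabel, hu]
  | cons i p ih =>
    rcases hu : u.label [] with _ | f | a
    · simp [substLabel_of_label_nil_none hu]
    · simpa [substLabel_cons_of_label_nil_inl hu] using ih (u.subtree i)
    · simp [substLabel_of_label_nil_inr hu]

end subst

end Coterm

open Coterm

namespace QuasiRegular

variable {σ : Signature} (Q : QuasiRegular σ) {X Y : Type}

theorem mem_of_isFinite {t : Coterm σ X} (ht : t.IsFinite) : t ∈ Q.Del X :=
  finite_induction (Q.bot_mem X) (Q.var_mem X) (fun f ts _ => Q.op_closed X f ts) ht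

theorem rename_mem (h : X → Y) {t : Coterm σ X} (ht : t ∈ Q.Del X) : rename h t ∈ Q.Del Y :=
  Q.stable X Y (rename h) (isOmegaContMorphism_rename h)
    (fun x => by simpa [rename_var] using Q.var_mem Y (h x)) t ht

theorem subst_mem {k : X → Coterm σ Y} (hk : ∀ x, k x ∈ Q.Del Y) {t : Coterm σ X}
    (ht : t ∈ Q.Del X) : subst k t ∈ Q.Del Y :=
  Q.stable X Y (subst k) (isOmegaContMorphism_subst k) (fun x => by simpa [subst_var] using hk x)
    t ht

end QuasiRegular

section interp

variable {σ : Signature} {A : Type*} [PartialOrder A] {Y : Type*}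

theorem interp_subst_eq_interp_rename {β : Coterm σ A → A} {D : Set (Coterm σ A)}
    (hD : ∀ u ∈ D, IsLUB {x | ∃ s, Ll s u ∧ x = β s} (β u)) (k : Y → Coterm σ A) (g : Y → A)
    {t : Coterm σ Y} (ht : subst k t ∈ D) (hgt : rename g t ∈ D)
    (hs : ∀ s, Ll s t → subst k s ∈ D) (hfin : ∀ s, Ll s t → β (subst k s) = β (rename g s)) :
    β (subst k t) = β (rename g t) := by
  let S := {x | ∃ s, Ll s t ∧ x = β (rename g s)}
  have hrename : IsLUB S (β (rename g t)) := by
    convert hD _ hgt using 1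
    ext x
    simp only [S, ll_rename_iff]
    constructor
    · rintro ⟨s, hs, rfl⟩; exact ⟨_, ⟨s, hs, rfl⟩, rfl⟩
    · rintro ⟨_, ⟨s, hs, rfl⟩, rfl⟩; exact ⟨s, hs, rfl⟩
  have hsubst : IsLUB S (β (subst k t)) := by
    refine ⟨?_, fun w hw => (hD _ ht).2 ?_⟩
    · rintro _ ⟨s, hst, rfl⟩
      rw [← hfin s hst]
      exact (hD _ (hs s hst)).2 fun _ ⟨r, hr, hx⟩ =>
        hx ▸ (hD _ ht).1 ⟨r, hr.trans_le (subst_mono k hst.2), rfl⟩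
    · rintro _ ⟨r, hr, rfl⟩
      obtain ⟨s, hst, hrs⟩ := ll_subst k hr
      exact ((hD _ (hs s hst)).1 ⟨r, ⟨hr.1, hrs⟩, rfl⟩).trans (hfin s hst ▸ hw ⟨s, hst, rfl⟩)
  exact hsubst.unique hrename

end interp

namespace IsOmegaContStructure

variable {σ : Signature} {B : Type*} [PartialOrder B] [OrderBot B] {alg : OrderedAlg σ B}
  {β : Coterm σ B → B}

theorem interp_subst (hω : IsOmegaContStructure alg β) {Y : Type*} (k : Y → Coterm σ B)
    (t : Coterm σ Y) : β (subst k t) = β (rename (fun y => β (k y)) t) := by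
  obtain ⟨hbot, hvar, hnode, -, hlub, -, -⟩ := hω
  refine interp_subst_eq_interp_rename (D := Set.univ) (fun u _ => hlub u) k _ trivial trivial
    (fun _ _ => trivial) fun s hs => ?_
  refine finite_induction ?_ (fun y => ?_) (fun f ss _ ih => ?_) hs.1
  · rw [subst_bot, rename_bot]
  · rw [subst_var, rename_var, hvar]
  · rw [subst_node, rename_node, hnode, hnode]
    exact congrArg _ (funext ih)

end IsOmegaContStructure

namespace IsDelStructure

variable {σ : Signature} {Q : QuasiRegular σ} {A : Type} [PartialOrder A] [OrderBot A]
  {alg : OrderedAlg σ A} {β : Coterm σ A → A}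

theorem le_interp_of_ll (hδ : IsDelStructure Q alg β) {s t : Coterm σ A} (ht : t ∈ Q.Del A)
    (hst : Ll s t) : β s ≤ β t :=
  (hδ.2.1 t ht).1 ⟨s, hst, rfl⟩

theorem isLUB_op (hδ : IsDelStructure Q alg β) (f : σ.symb) (ts : Fin (σ.ar f) → Coterm σ A)
    (hts : ∀ i, ts i ∈ Q.Del A) :
    IsLUB {x | ∃ ss : Fin (σ.ar f) → Coterm σ A, (∀ i, Ll (ss i) (ts i)) ∧
      x = alg.op f (fun i => β (ss i))} (alg.op f fun i => β (ts i)) := by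
  refine ⟨?_, fun w hw => ?_⟩
  · rintro _ ⟨ss, hss, rfl⟩
    exact alg.mono f _ _ fun i => hδ.le_interp_of_ll (hts i) (hss i)
  -- replace the arguments by the `β (ts i)` one at a time, by continuity in each argument
  suffices H : ∀ I : Finset (Fin (σ.ar f)), ∀ as : Fin (σ.ar f) → A,
      (∀ i ∈ I, as i = β (ts i)) → (∀ i ∉ I, ∃ s, Ll s (ts i) ∧ as i = β s) →
      alg.op f as ≤ w from
    H Finset.univ _ (fun _ _ => rfl) fun i hi => absurd (Finset.mem_univ i) hi
  intro I
  induction I using Finset.induction_on with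
  | empty =>
    intro as _ has
    choose ss hss has using fun i => has i (Finset.notMem_empty i)
    exact hw ⟨ss, hss, congrArg _ (funext has)⟩
  | insert j I hj ih =>
    intro as hI hnI
    rw [← Function.update_eq_self j as, hI j (Finset.mem_insert_self j I)]
    refine (hδ.2.2 f as j (ts j) (hts j)).2 ?_
    rintro _ ⟨s, hs, rfl⟩
    refine ih _ (fun i hi => ?_) fun i hi => ?_
    · rw [Function.update_of_ne (ne_of_mem_of_not_mem hi hj)]
      exact hI i (Finset.mem_insert_of_mem hi)
    · by_cases hij : i = j
      · subst hij
        exact ⟨s, hs, Function.update_self ..⟩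
      · rw [Function.update_of_ne hij]
        exact hnI i (by simp [hij, hi])

theorem interp_node (hδ : IsDelStructure Q alg β) (f : σ.symb) (ts : Fin (σ.ar f) → Coterm σ A)
    (hts : ∀ i, ts i ∈ Q.Del A) : β (node f ts) = alg.op f (fun i => β (ts i)) := by
  have hop := hδ.isLUB_op f ts hts
  refine (hδ.2.1 _ (Q.op_closed A f ts hts)).unique ⟨?_, fun w hw => hop.2 ?_⟩
  · rintro _ ⟨s, hs, rfl⟩
    rcases ll_node_iff.mp hs with rfl | ⟨ss, hss, rfl⟩
    · rw [hδ.1.1]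
      exact bot_le
    · rw [hδ.1.2.2.1 f ss fun i => (hss i).1]
      exact hop.1 ⟨ss, hss, rfl⟩
  · rintro _ ⟨ss, hss, rfl⟩
    rw [← hδ.1.2.2.1 f ss fun i => (hss i).1]
    exact hw ⟨_, ll_node_iff.mpr (Or.inr ⟨ss, hss, rfl⟩), rfl⟩

theorem interp_subst (hδ : IsDelStructure Q alg β) {Y : Type} (k : Y → Coterm σ A)
    (hk : ∀ y, k y ∈ Q.Del A) {t : Coterm σ Y} (ht : t ∈ Q.Del Y) :
    β (subst k t) = β (rename (fun y => β (k y)) t) := by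
  have hsubst {s : Coterm σ Y} (hs : s.IsFinite) : subst k s ∈ Q.Del A :=
    Q.subst_mem hk (Q.mem_of_isFinite hs)
  refine interp_subst_eq_interp_rename hδ.2.1 k _ (Q.subst_mem hk ht) (Q.rename_mem _ ht)
    (fun s hs => hsubst hs.1) fun s hs => ?_
  refine finite_induction ?_ (fun y => ?_) (fun f ss hss ih => ?_) hs.1
  · rw [subst_bot, rename_bot]
  · rw [subst_var, rename_var, hδ.1.2.1]
  · rw [subst_node, rename_node, hδ.interp_node f _ fun i => hsubst (hss i),
      hδ.1.2.2.1 f _ fun i => (hss i).rename _]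
    exact congrArg _ (funext ih)

end IsDelStructure

theorem Order.Ideal.exists_forall_le {P ι : Type*} [Preorder P] [Finite ι] (I : Order.Ideal P)
    {a : ι → P} (ha : ∀ i, a i ∈ I) : ∃ z ∈ I, ∀ i, a i ≤ z := by
  classical
  have : Nonempty I := I.nonempty.to_subtype
  have := Fintype.ofFinite ι
  obtain ⟨z, hz⟩ := (directedOn_iff_directed.mp I.directed).finset_le
    (Finset.univ.image fun i => (⟨a i, ha i⟩ : I))
  exact ⟨z, z.2, fun i => hz _ (Finset.mem_image_of_mem _ (Finset.mem_univ i))⟩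

def Order.Ideal.directedSup {P : Type*} [Preorder P] (S : Set (Order.Ideal P))
    (hne : S.Nonempty) (hdir : DirectedOn (· ≤ ·) S) : Order.Ideal P :=
  (Order.isIdeal_sUnion_of_directedOn (C := SetLike.coe '' S) (by
    rintro _ ⟨I, -, rfl⟩; exact I.isIdeal) (directedOn_image.mpr hdir) (hne.image _)).toIdeal

theorem Order.Ideal.mem_directedSup {P : Type*} [Preorder P] {S : Set (Order.Ideal P)}
    {hne : S.Nonempty} {hdir : DirectedOn (· ≤ ·) S} {x : P} :
    x ∈ Order.Ideal.directedSup S hne hdir ↔ ∃ I ∈ S, x ∈ I := by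
  change x ∈ ⋃₀ (SetLike.coe '' S) ↔ _
  simp

theorem Order.Ideal.isLUB_directedSup {P : Type*} [Preorder P] (S : Set (Order.Ideal P))
    (hne : S.Nonempty) (hdir : DirectedOn (· ≤ ·) S) :
    IsLUB S (Order.Ideal.directedSup S hne hdir) :=
  ⟨fun I hI _ hx => Order.Ideal.mem_directedSup.mpr ⟨I, hI, hx⟩,
    fun _ hJ _ hx => by
      obtain ⟨I, hI, hxI⟩ := Order.Ideal.mem_directedSup.mp hx
      exact hJ hI hxI⟩

namespace OrderedAlg

variable {σ : Signature} {A : Type*} [PartialOrder A] [OrderBot A] (alg : OrderedAlg σ A)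

def idealOp (f : σ.symb) (Is : Fin (σ.ar f) → Order.Ideal A) : Order.Ideal A :=
  Order.IsIdeal.toIdeal (I := {x | ∃ a : Fin (σ.ar f) → A, (∀ i, a i ∈ Is i) ∧ x ≤ alg.op f a})
    { IsLowerSet := fun _ _ hyx ⟨a, ha, hx⟩ => ⟨a, ha, hyx.trans hx⟩
      Nonempty := ⟨⊥, fun _ => ⊥, fun i => (Is i).bot_mem, bot_le⟩
      Directed := by
        rintro x ⟨a, ha, hx⟩ y ⟨a', ha', hy⟩
        choose c hc hac hac' using fun i => (Is i).directed _ (ha i) _ (ha' i)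
        exact ⟨alg.op f c, ⟨c, hc, le_rfl⟩, hx.trans (alg.mono f a c hac),
          hy.trans (alg.mono f a' c hac')⟩ }

def ideal : OrderedAlg σ (Order.Ideal A) where
  op := alg.idealOp
  mono _ _ _ h _ := fun ⟨a, ha, hx⟩ => ⟨a, fun i => h i (ha i), hx⟩

theorem idealOp_isLUB_update (f : σ.symb) (Is : Fin (σ.ar f) → Order.Ideal A) (i : Fin (σ.ar f))
    (S : Set (Order.Ideal A)) (hne : S.Nonempty) (hdir : DirectedOn (· ≤ ·) S)
    {J : Order.Ideal A} (hJ : IsLUB S J) :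
    IsLUB {x | ∃ I ∈ S, x = alg.idealOp f (Function.update Is i I)}
      (alg.idealOp f (Function.update Is i J)) := by
  obtain rfl := hJ.unique (Order.Ideal.isLUB_directedSup S hne hdir)
  refine ⟨?_, fun K hK x ⟨a, ha, hx⟩ => ?_⟩
  · rintro _ ⟨I, hI, rfl⟩
    refine alg.ideal.mono f _ _ fun j => ?_
    rcases eq_or_ne j i with rfl | hj
    · simpa using hJ.1 hI
    · simp [hj]
  · obtain ⟨I, hI, haI⟩ := Order.Ideal.mem_directedSup.mp (by simpa using ha i)
    refine hK ⟨I, hI, rfl⟩ ⟨a, fun j => ?_, hx⟩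
    rcases eq_or_ne j i with rfl | hj
    · simpa using haI
    · simpa [hj] using ha j

end OrderedAlg

namespace IsFinInterp

variable {σ : Signature} {A : Type*} [PartialOrder A] [OrderBot A] {alg : OrderedAlg σ A}
  {β : Coterm σ A → A}

theorem interp_rename_le (hβ : IsFinInterp alg β) {Y : Type*} {s s' : Coterm σ Y}
    (hs' : s'.IsFinite) (hss' : s ≤ s') {c c' : Y → A} (hc : ∀ y, c y ≤ c' y) :
    β (rename c s) ≤ β (rename c' s') := by
  obtain ⟨hbot, hvar, hnode, hmono⟩ := hβ
  have hs := hs'.mono hss'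
  refine le_trans ?_ (hmono _ _ (hs.rename c') (hs'.rename c') (rename_mono c' hss'))
  refine finite_induction ?_ (fun y => ?_) (fun f ss hss ih => ?_) hs
  · rw [rename_bot, hbot]
    exact bot_le
  · rw [rename_var, rename_var, hvar, hvar]
    exact hc y
  · rw [rename_node, rename_node, hnode _ _ fun i => (hss i).rename c,
      hnode _ _ fun i => (hss i).rename c']
    exact alg.mono f _ _ ih

/-- A single choice function `c` for all occurrences of a variable suffices, as the ideals are
directed. -/
def idealInterp (hβ : IsFinInterp alg β) (T : Coterm σ (Order.Ideal A)) : Order.Ideal A :=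
  Order.IsIdeal.toIdeal (I := {x | ∃ s, Ll s T ∧
      ∃ c : Order.Ideal A → A, (∀ I, c I ∈ I) ∧ x ≤ β (rename c s)})
    { IsLowerSet := fun _ _ hyx ⟨s, hs, c, hc, hx⟩ => ⟨s, hs, c, hc, hyx.trans hx⟩
      Nonempty := ⟨⊥, ⊥, ll_bot, fun _ => ⊥, fun I => I.bot_mem, bot_le⟩
      Directed := by
        rintro x ⟨s, hs, c, hc, hx⟩ y ⟨s', hs', c', hc', hy⟩
        obtain ⟨s'', hs'', hss'', hs's''⟩ := directedOn_ll T s hs s' hs'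
        choose c'' hc'' hcc'' hc'c'' using fun I : Order.Ideal A => I.directed _ (hc I) _ (hc' I)
        exact ⟨β (rename c'' s''), ⟨s'', hs'', c'', hc'', le_rfl⟩,
          hx.trans (hβ.interp_rename_le hs''.1 hss'' hcc''),
          hy.trans (hβ.interp_rename_le hs''.1 hs's'' hc'c'')⟩ }

variable (hβ : IsFinInterp alg β)

theorem mem_idealInterp {T : Coterm σ (Order.Ideal A)} {x : A} :
    x ∈ hβ.idealInterp T ↔
      ∃ s, Ll s T ∧ ∃ c : Order.Ideal A → A, (∀ I, c I ∈ I) ∧ x ≤ β (rename c s) :=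
  Iff.rfl

theorem idealInterp_mono {T T' : Coterm σ (Order.Ideal A)} (h : T ≤ T') :
    hβ.idealInterp T ≤ hβ.idealInterp T' :=
  fun _ ⟨s, hs, hx⟩ => ⟨s, hs.trans_le h, hx⟩

theorem idealInterp_bot : hβ.idealInterp ⊥ = ⊥ := by
  refine le_antisymm (fun x hx => ?_) bot_le
  obtain ⟨s, hs, c, -, hx⟩ := hβ.mem_idealInterp.mp hx
  rw [le_bot_iff.mp hs.2, rename_bot, hβ.1] at hx
  exact Order.Ideal.mem_principal.mpr hx

theorem idealInterp_var (I : Order.Ideal A) : hβ.idealInterp (var I) = I := by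
  classical
  refine SetLike.ext fun x => hβ.mem_idealInterp.trans ⟨fun ⟨s, hs, c, hc, hx⟩ => ?_, fun hx => ?_⟩
  · rcases eq_bot_or_eq_of_le_var hs.2 with rfl | rfl
    · rw [rename_bot, hβ.1] at hx
      exact I.lower hx I.bot_mem
    · rw [rename_var, hβ.2.1] at hx
      exact I.lower hx (hc I)
  · refine ⟨var I, ll_self (isFinite_var I), Function.update (fun _ => ⊥) I x, fun J => ?_, ?_⟩
    · rcases eq_or_ne J I with rfl | hJ
      · simpa using hx
      · simp [hJ]
    · simp [rename_var, hβ.2.1]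

theorem idealInterp_node (f : σ.symb) (Ts : Fin (σ.ar f) → Coterm σ (Order.Ideal A)) :
    hβ.idealInterp (node f Ts) = alg.idealOp f (fun i => hβ.idealInterp (Ts i)) := by
  refine SetLike.ext fun x => hβ.mem_idealInterp.trans
    ⟨fun ⟨s, hs, c, hc, hx⟩ => ?_, fun ⟨a, ha, hx⟩ => ?_⟩
  · rcases ll_node_iff.mp hs with rfl | ⟨ss, hss, rfl⟩
    · rw [rename_bot, hβ.1] at hx
      exact (alg.idealOp f _).lower hx (alg.idealOp f _).bot_mem
    · rw [rename_node, hβ.2.2.1 _ _ fun i => (hss i).1.rename c] at hx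
      exact ⟨_, fun i => ⟨ss i, hss i, c, hc, le_rfl⟩, hx⟩
  · choose ss hss cs hcs has using ha
    choose c hc hcsc using fun I : Order.Ideal A =>
      I.exists_forall_le (a := fun i => cs i I) fun i => hcs i I
    refine ⟨node f ss, ll_node_iff.mpr (Or.inr ⟨ss, hss, rfl⟩), c, hc, hx.trans ?_⟩
    rw [rename_node, hβ.2.2.1 _ _ fun i => (hss i).1.rename c]
    exact alg.mono f _ _ fun i =>
      (has i).trans (hβ.interp_rename_le (hss i).1 le_rfl fun I => hcsc I i)

theorem isLUB_idealInterp (T : Coterm σ (Order.Ideal A)) :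
    IsLUB {I | ∃ s, Ll s T ∧ I = hβ.idealInterp s} (hβ.idealInterp T) := by
  refine ⟨?_, fun J hJ x ⟨s, hs, hx⟩ => hJ ⟨s, hs, rfl⟩ ⟨s, ll_self hs.1, hx⟩⟩
  rintro _ ⟨s, hs, rfl⟩
  exact hβ.idealInterp_mono hs.2

theorem satisfiesIneqs_idealInterp {E : Set (Coterm σ ℕ × Coterm σ ℕ)}
    (hE : ∀ e ∈ E, e.1.IsFinite ∧ e.2.IsFinite) (hsat : SatisfiesIneqs β E) :
    SatisfiesIneqs hβ.idealInterp E := by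
  intro e he v x hx
  obtain ⟨s', hs', c, hc, hx⟩ := hβ.mem_idealInterp.mp hx
  obtain ⟨s, hs, rfl⟩ := ll_rename_iff.mp hs'
  refine ⟨rename v e.2, ll_self ((hE e he).2.rename v), c, hc, ?_⟩
  rw [rename_comp] at hx ⊢
  exact hx.trans ((hβ.2.2.2 _ _ (hs.1.rename _) ((hE e he).1.rename _) (rename_mono _ hs.2)).trans
    (hsat e he _))

theorem interp_rename_mem_idealInterp {Y : Type*} {s : Coterm σ Y} (hs : s.IsFinite)
    {v : Y → A} {w : Y → Order.Ideal A} (hvw : ∀ y, v y ∈ w y) :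
    β (rename v s) ∈ hβ.idealInterp (rename w s) := by
  refine finite_induction ?_ (fun y => ?_) (fun f ss hss ih => ?_) hs
  · rw [rename_bot, rename_bot, hβ.idealInterp_bot, hβ.1]
    exact Order.Ideal.bot_mem _
  · rw [rename_var, rename_var, hβ.idealInterp_var, hβ.2.1]
    exact hvw y
  · rw [rename_node, rename_node, hβ.idealInterp_node, hβ.2.2.1 _ _ fun i => (hss i).rename v]
    exact ⟨_, ih, le_rfl⟩

theorem exists_ll_le_of_mem_idealInterp {Y : Type*} {h : Y → A} {u : Coterm σ Y} {x : A}
    (hx : x ∈ hβ.idealInterp (rename (fun y => Order.Ideal.principal (h y)) u)) :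
    ∃ s, Ll s u ∧ x ≤ β (rename h s) := by
  obtain ⟨s', hs', c, hc, hx⟩ := hβ.mem_idealInterp.mp hx
  obtain ⟨s, hs, rfl⟩ := ll_rename_iff.mp hs'
  rw [rename_comp] at hx
  exact ⟨s, hs, hx.trans (hβ.interp_rename_le hs.1 le_rfl fun y => hc (.principal (h y)))⟩

end IsFinInterp

def IsFinInterp.idealCompletion {σ : Signature} {A : Type} [PartialOrder A] [OrderBot A]
    {alg : OrderedAlg σ A} {β : Coterm σ A → A} (hβ : IsFinInterp alg β) : OmegaContAlg σ where
  A := Order.Ideal A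
  po := inferInstance
  ob := inferInstance
  alg := alg.ideal
  interp := hβ.idealInterp
  str := ⟨hβ.idealInterp_bot, hβ.idealInterp_var, hβ.idealInterp_node,
    fun _ _ => hβ.idealInterp_mono, hβ.isLUB_idealInterp,
    fun S _ hne hdir => ⟨_, Order.Ideal.isLUB_directedSup S hne hdir⟩,
    fun f Is i S _ _ hne hdir hb => alg.idealOp_isLUB_update f Is i S hne hdir hb⟩

section FreeDelAlgebra

variable {σ : Signature} {Q : QuasiRegular σ} {X F : Type} [PartialOrder F] [OrderBot F]
  {algω : OrderedAlg σ F} {βω : Coterm σ F → F} {ι : X → F}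
  {A : Type} [PartialOrder A] [OrderBot A] {alg : OrderedAlg σ A} {β : Coterm σ A → A}

/-- The free extension of `x ↦ ↓(h x)` into the ideal completion of `A` is monotone. -/
theorem interp_rename_le_of_le {E : Set (Coterm σ ℕ × Coterm σ ℕ)}
    (hE : ∀ e ∈ E, e.1.IsFinite ∧ e.2.IsFinite) (hfree : IsFreeOmegaCont E X βω ι)
    (hδ : IsDelStructure Q alg β) (hsat : SatisfiesIneqs β E) (h : X → A) {u v : Coterm σ X}
    (hu : u ∈ Q.Del X) (hv : v ∈ Q.Del X) (huv : βω (rename ι u) ≤ βω (rename ι v)) :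
    β (rename h u) ≤ β (rename h v) := by
  obtain ⟨g, ⟨hgmono, -, hgmorph, hgι⟩, -⟩ := hfree hδ.1.idealCompletion
    (hδ.1.satisfiesIneqs_idealInterp hE hsat) fun x => Order.Ideal.principal (h x)
  have hg (w : Coterm σ X) :
      g (βω (rename ι w)) = hδ.1.idealInterp (rename (fun x => .principal (h x)) w) := by
    rw [hgmorph, rename_comp, show g ∘ ι = _ from funext hgι]
    rfl
  refine (hδ.2.1 _ (Q.rename_mem h hu)).2 ?_
  rintro _ ⟨_, hs', rfl⟩
  obtain ⟨s, hs, rfl⟩ := ll_rename_iff.mp hs'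
  have hmem : β (rename h s) ∈ hδ.1.idealInterp (rename (fun x => .principal (h x)) v) := by
    rw [← hg]
    refine hgmono _ _ huv ?_
    rw [hg]
    exact hδ.1.idealInterp_mono (rename_mono _ hs.2)
      (hδ.1.interp_rename_mem_idealInterp hs.1 fun x => Order.Ideal.mem_principal_self)
  obtain ⟨s₀, hs₀, hle⟩ := hδ.1.exists_ll_le_of_mem_idealInterp hmem
  exact hle.trans (hδ.le_interp_of_ll (Q.rename_mem h hv) (ll_rename_iff.mpr ⟨s₀, hs₀, rfl⟩))

theorem exists_apply_interp_rename_eq {E : Set (Coterm σ ℕ × Coterm σ ℕ)}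
    (hE : ∀ e ∈ E, e.1.IsFinite ∧ e.2.IsFinite) (hfree : IsFreeOmegaCont E X βω ι)
    (hδ : IsDelStructure Q alg β) (hsat : SatisfiesIneqs β E) (h : X → A) :
    ∃ g : F → A, ∀ u ∈ Q.Del X, g (βω (rename ι u)) = β (rename h u) := by
  have hfac : Function.FactorsThrough (fun u : Q.Del X => β (rename h u))
      (fun u : Q.Del X => βω (rename ι u)) := fun u v huv =>
    le_antisymm (interp_rename_le_of_le hE hfree hδ hsat h u.2 v.2 huv.le)
      (interp_rename_le_of_le hE hfree hδ hsat h v.2 u.2 huv.ge)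
  exact ⟨Function.extend _ _ fun _ => ⊥, fun u hu => hfac.extend_apply _ ⟨u, hu⟩⟩

theorem apply_interp_eq_interp_rename
    (hω : IsOmegaContStructure algω βω) (hδ : IsDelStructure Q alg β) {h : X → A} {g : F → A}
    (hg : ∀ u ∈ Q.Del X, g (βω (rename ι u)) = β (rename h u)) {t : Coterm σ F}
    (ht : t ∈ Q.Del F)
    (hR : ∀ p a, t.label p = some (Sum.inr a) → ∃ u ∈ Q.Del X, a = βω (rename ι u)) :
    g (βω t) = β (rename g t) := by
  classical
  have hname : ∀ a, ∃ u ∈ Q.Del X, (∃ u ∈ Q.Del X, a = βω (rename ι u)) →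
      a = βω (rename ι u) := by
    intro a
    by_cases ha : ∃ u ∈ Q.Del X, a = βω (rename ι u)
    · obtain ⟨u, hu, rfl⟩ := ha
      exact ⟨u, hu, fun _ => rfl⟩
    · exact ⟨⊥, Q.bot_mem X, fun h => absurd h ha⟩
  choose k hk hka using hname
  have hleaf (p : List ℕ) (a : F) (hp : t.label p = some (Sum.inr a)) :
      βω (rename ι (k a)) = a :=
    (hka a (hR p a hp)).symm
  have hβωt : βω t = βω (rename ι (subst k t)) := by
    rw [rename_subst, hω.interp_subst, rename_congr (h' := id) hleaf, rename_id]
  calc g (βω t) = β (rename h (subst k t)) := by rw [hβωt, hg _ (Q.subst_mem hk ht)]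
    _ = β (rename (fun a => β (rename h (k a))) t) := by
      rw [rename_subst, hδ.interp_subst _ (fun a => Q.rename_mem h (hk a)) ht]
    _ = β (rename g t) := by
      refine congrArg β (rename_congr fun p a hp => ?_)
      rw [← hg _ (hk a), hleaf p a hp]

theorem exists_mem_del_of_label_rename (hω : IsOmegaContStructure algω βω) {u : Coterm σ X} :
    ∀ p a, (rename ι u).label p = some (Sum.inr a) → ∃ u ∈ Q.Del X, a = βω (rename ι u) := by
  intro p a hp
  obtain ⟨x, -, rfl⟩ := rename_label_eq_inr_iff.mp hp
  exact ⟨var x, Q.var_mem X x, by rw [rename_var, hω.2.1]⟩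

end FreeDelAlgebra

theorem stmt_16_general (σ : Signature) (Q : QuasiRegular σ)
    (E : Set (Coterm σ ℕ × Coterm σ ℕ))
    (hE : ∀ e ∈ E, (e.1).IsFinite ∧ (e.2).IsFinite)
    (X : Type) (Fω : Type) [PartialOrder Fω] [OrderBot Fω]
    (algω : OrderedAlg σ Fω) (βω : Coterm σ Fω → Fω)
    (hω : IsOmegaContStructure algω βω)
    (ι : X → Fω)
    (hfree : IsFreeOmegaCont E X βω ι) :
    -- `R(X)`, the set of elements of `F_ω(X)` denoted by the terms in `ΔX`:
    ∀ R : Set Fω, R = {a : Fω | ∃ t ∈ Q.Del X, a = βω (Coterm.rename ι t)} →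
    ∀ B : DelAlg σ Q, @SatisfiesIneqs σ B.A B.po B.interp E →
    ∀ h : X → B.A,
      ∃ g : Fω → B.A,
        -- `g` restricted to `R(X)` is a Δ-algebra morphism extending `h`:
        ((∀ a b : Fω, a ∈ R → b ∈ R → a ≤ b → B.po.le (g a) (g b)) ∧
         g ⊥ = (@OrderBot.toBot B.A B.po.toLE B.ob).bot ∧
         (∀ t : Coterm σ Fω, t ∈ Q.Del Fω →
           (∀ (p : List ℕ) (x : Fω), t.label p = some (Sum.inr x) → x ∈ R) →
           g (βω t) = B.interp (Coterm.rename g t)) ∧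
         (∀ x : X, g (ι x) = h x)) ∧
        -- and it is the unique such morphism on `R(X)`:
        (∀ g' : Fω → B.A,
          ((∀ a b : Fω, a ∈ R → b ∈ R → a ≤ b → B.po.le (g' a) (g' b)) ∧
           g' ⊥ = (@OrderBot.toBot B.A B.po.toLE B.ob).bot ∧
           (∀ t : Coterm σ Fω, t ∈ Q.Del Fω →
             (∀ (p : List ℕ) (x : Fω), t.label p = some (Sum.inr x) → x ∈ R) →
             g' (βω t) = B.interp (Coterm.rename g' t)) ∧
           (∀ x : X, g' (ι x) = h x)) →
          ∀ a ∈ R, g' a = g a) := by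
  intro R hR B hBE h
  let := B.po
  let := B.ob
  subst hR
  obtain ⟨g, hg⟩ := exists_apply_interp_rename_eq hE hfree B.str hBE h
  refine ⟨g, ⟨?_, ?_, fun t ht hR => apply_interp_eq_interp_rename hω B.str hg ht hR, fun x => ?_⟩,
    fun g' ⟨_, _, hmorph, hι⟩ a ⟨u, hu, ha⟩ => ?_⟩
  · rintro _ _ ⟨u, hu, rfl⟩ ⟨v, hv, rfl⟩ huv
    rw [hg u hu, hg v hv]
    exact interp_rename_le_of_le hE hfree B.str hBE h hu hv huv
  · rw [← hω.1, ← rename_bot ι, hg ⊥ (Q.bot_mem X), rename_bot]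
    exact B.str.1.1
  · rw [← hω.2.1 (ι x), ← rename_var, hg _ (Q.var_mem X x), rename_var]
    exact B.str.1.2.1 (h x)
  · rw [ha, hg u hu, hmorph _ (Q.rename_mem ι hu) (exists_mem_del_of_label_rename hω),
      rename_comp, show g' ∘ ι = h from funext hι]

/-- **Main Theorem.** Let `𝒱_ω` be the variety of ω-continuous
algebras defined by a set `E` of inequalities between finite partial terms,
`𝒱_r` the variety of Δ-algebras defined by `E`, `F_ω(X)` the free algebra of
`𝒱_ω` on `X` (with insertion of generators `ι`), and
`R(X) = { t^{F_ω(X)} : t ∈ ΔX }` the Δ-subalgebra of `F_ω(X)` generated by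
`X`.  Then `R(X)` is the free Δ-algebra in `𝒱_r` on generators `X`: for every
Δ-algebra `B ∈ 𝒱_r` and every `h : X → B`, there is a unique Δ-algebra
morphism `R(X) → B` extending `h`. -/
theorem stmt_16 (σ : Signature) (Q : QuasiRegular σ)
    (E : Set (Coterm σ ℕ × Coterm σ ℕ))
    (hE : ∀ e ∈ E, (e.1).IsFinite ∧ (e.2).IsFinite)
    (X : Type) (Fω : Type) [PartialOrder Fω] [OrderBot Fω]
    (algω : OrderedAlg σ Fω) (βω : Coterm σ Fω → Fω)
    (hω : IsOmegaContStructure algω βω)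
    (hωE : SatisfiesIneqs βω E) (ι : X → Fω)
    (hfree : IsFreeOmegaCont E X βω ι) :
    -- `R(X)`, the set of elements of `F_ω(X)` denoted by the terms in `ΔX`:
    ∀ R : Set Fω, R = {a : Fω | ∃ t ∈ Q.Del X, a = βω (Coterm.rename ι t)} →
    ∀ B : DelAlg σ Q, @SatisfiesIneqs σ B.A B.po B.interp E →
    ∀ h : X → B.A,
      ∃ g : Fω → B.A,
        -- `g` restricted to `R(X)` is a Δ-algebra morphism extending `h`:
        ((∀ a b : Fω, a ∈ R → b ∈ R → a ≤ b → B.po.le (g a) (g b)) ∧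
         g ⊥ = (@OrderBot.toBot B.A B.po.toLE B.ob).bot ∧
         (∀ t : Coterm σ Fω, t ∈ Q.Del Fω →
           (∀ (p : List ℕ) (x : Fω), t.label p = some (Sum.inr x) → x ∈ R) →
           g (βω t) = B.interp (Coterm.rename g t)) ∧
         (∀ x : X, g (ι x) = h x)) ∧
        -- and it is the unique such morphism on `R(X)`:
        (∀ g' : Fω → B.A,
          ((∀ a b : Fω, a ∈ R → b ∈ R → a ≤ b → B.po.le (g' a) (g' b)) ∧
           g' ⊥ = (@OrderBot.toBot B.A B.po.toLE B.ob).bot ∧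
           (∀ t : Coterm σ Fω, t ∈ Q.Del Fω →
             (∀ (p : List ℕ) (x : Fω), t.label p = some (Sum.inr x) → x ∈ R) →
             g' (βω t) = B.interp (Coterm.rename g' t)) ∧
           (∀ x : X, g' (ι x) = h x)) →
          ∀ a ∈ R, g' a = g a) :=
  stmt_16_general σ Q E hE X Fω algω βω hω ι hfree
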